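/- For every ℓ ≥ 0, the Weisfeiler-Leman labeling wl^{(ℓ)} refines the ℓ-walk labeling κ₊^{(ℓ)}, which in turn refines κ^{(ℓ)}: wl^{(ℓ)}(u) = wl^{(ℓ)}(v) implies κ₊^{(ℓ)}(u) = κ₊^{(ℓ)}(v), and κ₊^{(ℓ)}(u) = κ₊^{(ℓ)}(v) implies κ^{(ℓ)}(u) = κ^{(ℓ)}(v). -/

import Mathlib

open Finset

/-- A walk represented as a vertex function with consecutive vertices adjacent. -/
def IsWalk {V : Type*} (G : SimpleGraph V) {i : ℕ} (f : Fin (i+1) → V) : Prop :=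
  ∀ j : Fin i, G.Adj (f j.castSucc) (f j.succ)

/-- Walks of length `i` in `G`. -/
abbrev WalkLen {V : Type*} (G : SimpleGraph V) (i : ℕ) : Type _ :=
  { f : Fin (i+1) → V // IsWalk G f }

/-- Walks of length `i` in `G` starting at `v`. -/
abbrev WalkFrom {V : Type*} (G : SimpleGraph V) (v : V) (i : ℕ) : Type _ :=
  { f : Fin (i+1) → V // f 0 = v ∧ IsWalk G f }

noncomputable instance {V : Type*} (G : SimpleGraph V) [Fintype V] (i : ℕ) :
    Fintype (WalkLen G i) := Fintype.ofFinite _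

noncomputable instance {V : Type*} (G : SimpleGraph V) [Fintype V] (v : V) (i : ℕ) :
    Fintype (WalkFrom G v i) := Fintype.ofFinite _

/-- Label sequence of a walk. -/
def lseq {V S : Type*} (lab : V → S) {i : ℕ} (f : Fin (i+1) → V) : List S :=
  List.ofFn (lab ∘ f)

/-- κ^{(i)}(v): multiset of label sequences of walks of length exactly i from v. -/
noncomputable def kappa {V S : Type*} (G : SimpleGraph V) [Fintype V] (lab : V → S)
    (i : ℕ) (v : V) : Multiset (List S) :=
  (Finset.univ : Finset (WalkFrom G v i)).val.map fun w => lseq lab w.1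

/-- κ₊^{(ℓ)}(v): multiset of label sequences of walks of length at most ℓ from v. -/
noncomputable def kappaPlus {V S : Type*} (G : SimpleGraph V) [Fintype V] (lab : V → S)
    (ℓ : ℕ) (v : V) : Multiset (List S) :=
  ∑ i ∈ Finset.range (ℓ+1), kappa G lab i v

/-- The type of Weisfeiler-Leman labels after i iterations. -/
def WLL (S : Type*) : ℕ → Type _
  | 0 => S
  | (i+1) => WLL S i × Multiset (WLL S i)

/-- Weisfeiler-Leman refinement. -/
def wl {V S : Type*} (G : SimpleGraph V) [Fintype V] [DecidableRel G.Adj] (lab : V → S) :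
    (i : ℕ) → V → WLL S i
  | 0, v => lab v
  | (i+1), v => (wl G lab i v, (G.neighborFinset v).val.map (wl G lab i))

/-- Morgan's extended connectivity. -/
def ec {V : Type*} (G : SimpleGraph V) [Fintype V] [DecidableRel G.Adj] : ℕ → V → ℕ
  | 0, _ => 1
  | (i+1), v => ∑ u ∈ G.neighborFinset v, ec G i u

/-- Vertices of the direct product graph: pairs with matching labels. -/
abbrev ProdVert {V W S : Type*} (labG : V → S) (labH : W → S) : Type _ :=
  { p : V × W // labG p.1 = labH p.2 }

/-- The direct product graph of two labeled graphs. -/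
def prodGraph {V W S : Type*} (G : SimpleGraph V) (H : SimpleGraph W)
    (labG : V → S) (labH : W → S) : SimpleGraph (ProdVert labG labH) where
  Adj p q := G.Adj p.1.1 q.1.1 ∧ H.Adj p.1.2 q.1.2
  symm := ⟨fun _ _ h => ⟨h.1.symm, h.2.symm⟩⟩
  loopless := ⟨fun _ h => G.irrefl h.1⟩

open Classical in
/-- k_i(u,v): pairs of length-i walks from u and v with matching label sequences. -/
noncomputable def kwalk {V W S : Type*} (G : SimpleGraph V) (H : SimpleGraph W)
    [Fintype V] [Fintype W] (labG : V → S) (labH : W → S) (i : ℕ) (u : V) (v : W) : ℕ :=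
  ∑ w : WalkFrom G u i, ∑ w' : WalkFrom H v i,
    ∏ j : Fin (i+1), if labG (w.1 j) = labH (w'.1 j) then 1 else 0


section Aux

variable {V S : Type*} [Fintype V]

lemma multiset_sum_map_singleton {α β : Type*} (m : Multiset α) (f : α → β) :
    (m.map fun x => ({f x} : Multiset β)).sum = m.map f := by
  have := Multiset.sum_map_singleton (m.map f)
  rwa [Multiset.map_map] at this

lemma kappa_eq_sum (G : SimpleGraph V) (lab : V → S) (i : ℕ) (v : V) :
    kappa G lab i v = ∑ w : WalkFrom G v i, ({lseq lab w.1} : Multiset (List S)) := by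
  rw [kappa, Finset.sum_eq_multiset_sum, multiset_sum_map_singleton]

instance uniqueWalkFrom (G : SimpleGraph V) (v : V) : Unique (WalkFrom G v 0) where
  default := ⟨fun _ => v, rfl, fun j => j.elim0⟩
  uniq x := Subtype.ext (funext fun j => by rw [Fin.eq_zero j]; exact x.2.1)

lemma kappa_zero (G : SimpleGraph V) (lab : V → S) (v : V) :
    kappa G lab 0 v = {[lab v]} := by
  rw [kappa, Finset.univ_unique]
  simp [lseq, List.ofFn_succ]
  rfl

lemma lseq_cons (lab : V → S) {i : ℕ} (v : V) (f : Fin (i+1) → V) :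
    lseq lab (Fin.cons v f) = lab v :: lseq lab f := by
  simp [lseq, List.ofFn_succ, Function.comp]

/-- Decomposing a walk of length `i+1` from `v` into a neighbor and a shorter walk. -/
noncomputable def walkEquiv (G : SimpleGraph V) [DecidableRel G.Adj] (v : V) (i : ℕ) :
    (Σ p : G.neighborFinset v, WalkFrom G (p : V) i) ≃ WalkFrom G v (i+1) :=
  Equiv.ofBijective (fun x => ⟨Fin.cons v x.2.1, Fin.cons_zero _ _, fun j => by
    refine Fin.cases ?_ (fun k => ?_) j
    · have h0 : x.2.1 0 = (x.1 : V) := x.2.2.1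
      have : G.Adj v (x.1 : V) := by
        have := x.1.2; rwa [SimpleGraph.mem_neighborFinset] at this
      simpa [h0] using this
    · have := x.2.2.2 k
      simpa [← Fin.succ_castSucc] using this⟩) (by
    constructor
    · rintro ⟨⟨p, hp⟩, ⟨f, hf0, hf⟩⟩ ⟨⟨q, hq⟩, ⟨g, hg0, hg⟩⟩ h
      have hc : (Fin.cons v f : Fin (i+2) → V) = Fin.cons v g := congrArg Subtype.val h
      have hfg : f = g := by
        funext j
        have := congrFun hc j.succ
        simpa using this
      subst hfg
      have hpq : p = q := hf0.symm.trans hg0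
      subst hpq
      rfl
    · rintro ⟨f, hf0, hf⟩
      have h01 : G.Adj v (f 1) := by
        have h0 := hf 0
        rwa [show (0 : Fin (i+1)).castSucc = 0 from rfl, hf0] at h0
      refine ⟨⟨⟨f 1, (SimpleGraph.mem_neighborFinset _ _ _).mpr h01⟩,
        ⟨fun j => f j.succ, rfl, fun j => by
          have := hf j.succ
          simpa [← Fin.succ_castSucc] using this⟩⟩, ?_⟩
      refine Subtype.ext ?_
      show Fin.cons v (fun j => f j.succ) = f
      rw [← hf0]
      exact Fin.cons_self_tail f)

lemma kappa_succ (G : SimpleGraph V) [DecidableRel G.Adj] (lab : V → S) (i : ℕ) (v : V) :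
    kappa G lab (i+1) v
      = ∑ p ∈ G.neighborFinset v, (kappa G lab i p).map (List.cons (lab v)) := by
  have hrhs : ∀ p : V, (kappa G lab i p).map (List.cons (lab v))
      = ∑ w : WalkFrom G p i, ({lab v :: lseq lab w.1} : Multiset (List S)) := by
    intro p
    rw [kappa, Multiset.map_map, Finset.sum_eq_multiset_sum, multiset_sum_map_singleton]
    rfl
  rw [kappa_eq_sum]
  rw [← Fintype.sum_equiv (walkEquiv G v i)
    (fun x => ({lseq lab ((walkEquiv G v i x).1)} : Multiset (List S)))
    (fun w => ({lseq lab w.1} : Multiset (List S))) (fun x => rfl)]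
  have : ∀ x : (Σ p : G.neighborFinset v, WalkFrom G (p : V) i),
      ({lseq lab ((walkEquiv G v i x).1)} : Multiset (List S))
        = {lab v :: lseq lab x.2.1} := by
    intro x
    show ({lseq lab (Fin.cons v x.2.1 : Fin (i+1+1) → V)} : Multiset (List S)) = _
    rw [lseq_cons]
  rw [Fintype.sum_congr _ _ this]
  rw [show (Finset.univ : Finset ((p : { x // x ∈ G.neighborFinset v }) × WalkFrom G (↑p) i))
      = Finset.univ.sigma fun _ => Finset.univ from (Finset.univ_sigma_univ).symm,
    Finset.sum_sigma]
  rw [← Finset.sum_coe_sort (G.neighborFinset v)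
    (fun p => Multiset.map (List.cons (lab v)) (kappa G lab i p))]
  exact Finset.sum_congr rfl fun p _ => (hrhs p).symm

lemma lab_of_wl (G : SimpleGraph V) [DecidableRel G.Adj] (lab : V → S) :
    ∀ (i : ℕ) (u v : V), wl G lab i u = wl G lab i v → lab u = lab v := by
  intro i
  induction i with
  | zero => exact fun u v h => h
  | succ i ih =>
    intro u v h
    simp only [wl] at h
    exact ih u v (congrArg Prod.fst h)

lemma kappa_of_wl (G : SimpleGraph V) [DecidableRel G.Adj] (lab : V → S) :
    ∀ (i : ℕ) (u v : V), wl G lab i u = wl G lab i v → kappa G lab i u = kappa G lab i v := by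
  intro i
  induction i with
  | zero =>
    intro u v h
    rw [kappa_zero, kappa_zero, lab_of_wl G lab 0 u v h]
  | succ i ih =>
    intro u v h
    have hlab : lab u = lab v := lab_of_wl G lab _ u v h
    simp only [wl] at h
    have h2 : Multiset.map (wl G lab i) (G.neighborFinset u).val
        = Multiset.map (wl G lab i) (G.neighborFinset v).val := congrArg Prod.snd h
    rw [kappa_succ, kappa_succ, hlab]
    set g : V → Multiset (List S) := fun p => (kappa G lab i p).map (List.cons (lab v)) with hg
    have hfac : g.FactorsThrough (wl G lab i) := fun a b hab =>
      congrArg (Multiset.map (List.cons (lab v))) (ih a b hab)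
    have key : ∀ m : Multiset V,
        m.map g = (m.map (wl G lab i)).map (Function.extend (wl G lab i) g 0) := by
      intro m
      rw [Multiset.map_map]
      exact Multiset.map_congr rfl fun x _ => (hfac.extend_apply 0 x).symm
    rw [Finset.sum_eq_multiset_sum, Finset.sum_eq_multiset_sum, key, key, h2]

lemma length_mem_kappa (G : SimpleGraph V) (lab : V → S) (i : ℕ) (v : V) :
    ∀ l ∈ kappa G lab i v, l.length = i + 1 := by
  intro l hl
  rw [kappa] at hl
  obtain ⟨w, _, rfl⟩ := Multiset.mem_map.mp hl
  simp [lseq]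

lemma filter_sum_zero (G : SimpleGraph V) (lab : V → S) (ℓ : ℕ) (v : V) :
    ∀ n, n ≤ ℓ →
      (∑ i ∈ Finset.range n, kappa G lab i v).filter (fun l => l.length = ℓ + 1) = 0 := by
  intro n
  induction n with
  | zero => simp
  | succ n ih =>
    intro hn
    rw [Finset.sum_range_succ, Multiset.filter_add, ih (Nat.le_of_succ_le hn)]
    rw [zero_add, Multiset.filter_eq_nil]
    intro l hl
    have := length_mem_kappa G lab n v l hl
    omega

lemma kappa_eq_filter (G : SimpleGraph V) (lab : V → S) (ℓ : ℕ) (v : V) :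
    kappa G lab ℓ v = (kappaPlus G lab ℓ v).filter (fun l => l.length = ℓ + 1) := by
  rw [kappaPlus, Finset.sum_range_succ, Multiset.filter_add,
    filter_sum_zero G lab ℓ v ℓ le_rfl, zero_add,
    Multiset.filter_eq_self.mpr (length_mem_kappa G lab ℓ v)]

lemma wl_of_le (G : SimpleGraph V) [DecidableRel G.Adj] (lab : V → S) :
    ∀ (j i : ℕ) (u v : V), i ≤ j → wl G lab j u = wl G lab j v → wl G lab i u = wl G lab i v := by
  intro j
  induction j with
  | zero =>
    intro i u v hi h
    obtain rfl : i = 0 := Nat.le_zero.mp hi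
    exact h
  | succ j ih =>
    intro i u v hi h
    have h1 : wl G lab j u = wl G lab j v := by
      simp only [wl] at h
      exact congrArg Prod.fst h
    rcases Nat.lt_or_ge i (j+1) with h' | h'
    · exact ih i u v (Nat.lt_succ_iff.mp h') h1
    · have : i = j + 1 := le_antisymm hi h'
      subst this
      exact h

end Aux

/-- wl^{(ℓ)} refines κ₊^{(ℓ)}, which refines κ^{(ℓ)}. -/
theorem stmt_9 {V S : Type*} [Fintype V] (G : SimpleGraph V) [DecidableRel G.Adj]
    (lab : V → S) (ℓ : ℕ) (u v : V) :
    (wl G lab ℓ u = wl G lab ℓ v → kappaPlus G lab ℓ u = kappaPlus G lab ℓ v) ∧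
    (kappaPlus G lab ℓ u = kappaPlus G lab ℓ v → kappa G lab ℓ u = kappa G lab ℓ v) := by
  constructor
  · intro h
    rw [kappaPlus, kappaPlus]
    refine Finset.sum_congr rfl fun i hi => ?_
    rw [Finset.mem_range] at hi
    exact kappa_of_wl G lab i u v (wl_of_le G lab ℓ i u v (Nat.lt_succ_iff.mp hi) h)
  · intro h
    rw [kappa_eq_filter, kappa_eq_filter, h]
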